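/- arXiv:1809.06910 — 2 statements merged into one kernel-verified Lean document; each statement's English description precedes it below -/
import Mathlib

section
/- Let G be a connected undirected graph on n ≥ 2 vertices with doubled-edge oriented incidence matrix B ∈ ℝ^{n×ℓ}, let r ≥ 1, γ > 0, t₀ ∈ ℝ, and let φ : ℝ → ℝ^{nr} be a differentiable stacked reference signal with finite constants φ̄, dφ̄ such that ‖(Bᵀ⊗I_r)φ(t)‖_∞ ≤ φ̄ and ‖(Bᵀ⊗I_r)φ'(t)‖_∞ ≤ dφ̄ for all t ≥ t₀. For each agent i ∈ {1,…,n} let β_i ≥ (γφ̄ + dφ̄)·‖B(BᵀB)⁺ ⊗ I_r‖_∞, α_i > 0, δ_i ≥ 1, θ_i ∈ (0,1). Suppose x̂ : ℝ → ℝ^{nr} (the broadcast states), z : ℝ → ℝ^{nr}, κ₁,…,κ_{rℓ} : ℝ → ℝ, and η₁,…,η_n : ℝ → ℝ are such that z, the κⱼ, and the η_i are differentiable on [t₀,∞) and, writing x(t) = z(t) + φ(t), ξ̂(t) = (Bᵀ⊗I_r)x̂(t), K̂(t) = diag(κ₁(t),…,κ_{rℓ}(t)), w(t) = (B⊗I_r)K̂(t)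 sgn(ξ̂(t)) with agent blocks w_i(t) ∈ ℝ^r, and ε(t) = x(t) − x̂(t) with agent blocks ε_i(t) ∈ ℝ^r, the following hold for all t ≥ t₀: z'(t) = −γ z(t) − w(t); κⱼ'(t) = |ξ̂ⱼ(t)| with κⱼ(t₀) ≥ 0 for each j; η_i'(t) = −α_i η_i(t) − δ_i (β_i ‖ε_i(t)‖₁ − w_i(t)ᵀ ε_i(t)) with η_i(t₀) > 0 for each i; and the triggering inequality θ_i (β_i ‖ε_i(t)‖₁ − w_i(t)ᵀ ε_i(t)) ≤ η_i(t) holds for each i. Then the average-consensus error x̃(t) = x(t) − ((1/n)1_n1_nᵀ ⊗ I_r) φ(t) converges to 0 as t → ∞, for every initial condition z(t₀). -/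
open Matrix Kronecker Filter Topology

/-- Doubled-edge oriented incidence matrix of a simple graph. -/
noncomputable def dartIncidence {V : Type*} [Fintype V] [DecidableEq V] (G : SimpleGraph V)
    [DecidableRel G.Adj] : Matrix V G.Dart ℝ :=
  Matrix.of fun v d => if d.snd = v then 1 else if d.fst = v then -1 else 0

/-- Maximum absolute row-sum norm of a real matrix. -/
noncomputable def matInfNorm {m n : Type*} [Fintype m] [Fintype n] (A : Matrix m n ℝ) : ℝ :=
  ⨆ i, ∑ j, |A i j|

/-!
With `y = x - (J ⊗ I) φ` the consensus error, `R = B ⊗ I` and `M = P ⊗ I`, the identity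
`B P Bᵀ = I - J` (the rows of `I - J - B P Bᵀ` are annihilated by `B`, hence constant on the
connected graph, and they sum to zero) turns the closed loop into `y' = -γ y + R m - w`, with
`m = M Rᵀ (γ φ + φ')` bounded and `ξ̂ = Rᵀ (y - ε)`. Along this system the Lyapunov function
`½ ‖y‖₂² + ∑ ηᵢ / δᵢ + ½ ∑ (κⱼ - κ̄)²`, with `κ̄` a bound on `‖m‖`, satisfies `V' ≤ -γ ‖y‖₂²`:
the adaptive gains dominate the disturbance `m`, and the triggering inequality both keeps
`ηᵢ ≥ 0` and absorbs the terms in the measurement error `ε`. Hence `y`, `κ` and `y'` stay bounded,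
`‖y‖₂²` has a derivative bounded below, and a Barbalat-type argument gives `y → 0`.
-/

open Set

section Norms

variable {m n : Type*} [Fintype m] [Fintype n]

lemma matInfNorm_nonneg (A : Matrix m n ℝ) : 0 ≤ matInfNorm A :=
  Real.iSup_nonneg fun _ => Finset.sum_nonneg fun _ _ => abs_nonneg _

lemma norm_mulVec_le_matInfNorm_mul (A : Matrix m n ℝ) (v : n → ℝ) :
    ‖A *ᵥ v‖ ≤ matInfNorm A * ‖v‖ := by
  refine (pi_norm_le_iff_of_nonneg (by positivity [matInfNorm_nonneg A])).2 fun i => ?_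
  calc ‖(A *ᵥ v) i‖ ≤ ∑ j, |A i j| * ‖v‖ := by
        refine (Finset.abs_sum_le_sum_abs _ _).trans (Finset.sum_le_sum fun j _ => ?_)
        rw [abs_mul]
        exact mul_le_mul_of_nonneg_left (norm_le_pi_norm v j) (abs_nonneg _)
    _ ≤ matInfNorm A * ‖v‖ := by
        rw [← Finset.sum_mul]
        exact mul_le_mul_of_nonneg_right
          (le_ciSup (Set.finite_range fun i => ∑ j, |A i j|).bddAbove i) (norm_nonneg v)

lemma norm_mulVec_le_matInfNorm_mul_of_le (A : Matrix m n ℝ) {v : n → ℝ} {c : ℝ} (hv : ‖v‖ ≤ c) :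
    ‖A *ᵥ v‖ ≤ matInfNorm A * c :=
  (norm_mulVec_le_matInfNorm_mul A v).trans (mul_le_mul_of_nonneg_left hv (matInfNorm_nonneg A))

lemma norm_le_sqrt_sum_sq (v : n → ℝ) : ‖v‖ ≤ √(∑ j, v j ^ 2) :=
  (pi_norm_le_iff_of_nonneg (Real.sqrt_nonneg _)).2 fun j =>
    Real.abs_le_sqrt (Finset.single_le_sum (fun k _ => sq_nonneg (v k)) (Finset.mem_univ j))

lemma abs_dotProduct_le_card_mul (u v : n → ℝ) :
    |u ⬝ᵥ v| ≤ Fintype.card n * (‖u‖ * ‖v‖) := by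
  calc |u ⬝ᵥ v| ≤ ∑ j, |u j| * |v j| := by
        simpa only [dotProduct, abs_mul] using
          Finset.abs_sum_le_sum_abs (fun j => u j * v j) Finset.univ
    _ ≤ ∑ _j : n, ‖u‖ * ‖v‖ := Finset.sum_le_sum fun j _ =>
        mul_le_mul (norm_le_pi_norm u j) (norm_le_pi_norm v j) (abs_nonneg _) (norm_nonneg u)
    _ = Fintype.card n * (‖u‖ * ‖v‖) := by simp

end Norms

lemma mul_sign_eq_abs (x : ℝ) : x * Real.sign x = |x| := by
  rcases lt_trichotomy x 0 with hx | rfl | hx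
  · rw [Real.sign_of_neg hx, abs_of_neg hx, mul_neg_one]
  · simp
  · rw [Real.sign_of_pos hx, abs_of_pos hx, mul_one]

lemma abs_sign_le_one (x : ℝ) : |Real.sign x| ≤ 1 := by
  rcases Real.sign_apply_eq x with h | h | h <;> simp [h]

lemma norm_mul_sign_le {n : Type*} [Fintype n] (k ξ : n → ℝ) :
    ‖fun j => k j * Real.sign (ξ j)‖ ≤ ‖k‖ :=
  (pi_norm_le_iff_of_nonneg (norm_nonneg k)).2 fun j => by
    rw [Real.norm_eq_abs, abs_mul]
    exact (mul_le_of_le_one_right (abs_nonneg _) (abs_sign_le_one _)).trans (norm_le_pi_norm k j)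

section Calculus

lemma image_sub_le_mul_sub_of_hasDerivAt_le {D : Set ℝ} (hD : Convex ℝ D) {f f' : ℝ → ℝ} {C : ℝ}
    (hf : ∀ t ∈ D, HasDerivAt f (f' t) t) (hC : ∀ t ∈ D, f' t ≤ C) {a b : ℝ} (ha : a ∈ D)
    (hb : b ∈ D) (hab : a ≤ b) : f b - f a ≤ C * (b - a) :=
  hD.image_sub_le_mul_sub_of_deriv_le (fun t ht => (hf t ht).continuousAt.continuousWithinAt)
    (fun t ht => (hf t (interior_subset ht)).differentiableAt.differentiableWithinAt)
    (fun t ht => (hf t (interior_subset ht)).deriv ▸ hC t (interior_subset ht)) a ha b hb hab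

lemma nonneg_of_hasDerivAt_ge_neg_mul {f f' : ℝ → ℝ} {t₀ K : ℝ}
    (hf : ∀ t ≥ t₀, HasDerivAt f (f' t) t) (hK : ∀ t ≥ t₀, -(K * f t) ≤ f' t) (h₀ : 0 ≤ f t₀)
    {t : ℝ} (ht : t₀ ≤ t) : 0 ≤ f t := by
  -- `f t * exp (K t)` is nondecreasing
  have hg : ∀ s ≥ t₀, HasDerivAt (fun u => -(f u * Real.exp (K * u)))
      (-((f' s + K * f s) * Real.exp (K * s))) s := fun s hs => by
    refine ((hf s hs).fun_mul (hasDerivAt_id' s |>.const_mul K).exp).fun_neg.congr_deriv ?_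
    ring
  have := image_sub_le_mul_sub_of_hasDerivAt_le (convex_Ici t₀) hg
    (fun s hs => neg_nonpos.2 (mul_nonneg (by linarith [hK s hs]) (Real.exp_pos _).le))
    self_mem_Ici ht ht
  have h₁ : 0 ≤ f t * Real.exp (K * t) := by nlinarith [Real.exp_pos (K * t₀)]
  exact nonneg_of_mul_nonneg_left h₁ (Real.exp_pos _)

lemma hasDerivAt_sum_sq {ι : Type*} [Fintype ι] {y : ℝ → ι → ℝ} {y' : ι → ℝ} {t : ℝ}
    (hy : HasDerivAt y y' t) : HasDerivAt (fun s => ∑ p, y s p ^ 2) (2 * (y t ⬝ᵥ y')) t := by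
  refine (HasDerivAt.fun_sum (u := Finset.univ) fun p _ =>
    (hasDerivAt_pi.1 hy p).fun_pow 2).congr_deriv ?_
  simp only [dotProduct, Finset.mul_sum]
  refine Finset.sum_congr rfl fun p _ => ?_
  ring

end Calculus

section Barbalat

variable {f f' V V' : ℝ → ℝ} {t₀ c L : ℝ}

/-- Once `f u ≥ a`, the lower bound on `f'` keeps `f ≥ a / 2` for a time `a / (2 L)`. -/
lemma sub_le_of_le_of_hasDerivAt_le_neg_mul (hL : 0 < L)
    (hf : ∀ t ≥ t₀, HasDerivAt f (f' t) t) (hf' : ∀ t ≥ t₀, -L ≤ f' t)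
    (hV : ∀ t ≥ t₀, HasDerivAt V (V' t) t) (hV' : ∀ t ≥ t₀, V' t ≤ -(c * f t))
    (hc : 0 ≤ c) {a u : ℝ} (ha : 0 < a) (hu : t₀ ≤ u) (hfu : a ≤ f u) :
    V (u + a / (2 * L)) - V u ≤ -(c * (a / 2) * (a / (2 * L))) := by
  have hd : 0 < a / (2 * L) := by positivity
  have hf_half : ∀ s ∈ Icc u (u + a / (2 * L)), a / 2 ≤ f s := fun s hs => by
    have hfall := image_sub_le_mul_sub_of_hasDerivAt_le (convex_Ici t₀)
      (fun t ht => (hf t ht).neg) (fun t ht => neg_le.1 (hf' t ht)) hu (hu.trans hs.1) hs.1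
    have hLs : L * (s - u) ≤ a / 2 := by
      calc L * (s - u) ≤ L * (a / (2 * L)) := by gcongr; linarith [hs.2]
        _ = a / 2 := by field_simp
    simp only [Pi.neg_apply] at hfall
    linarith
  have := image_sub_le_mul_sub_of_hasDerivAt_le (C := -(c * (a / 2)))
    (convex_Icc u (u + a / (2 * L)))
    (fun s hs => hV s (hu.trans hs.1))
    (fun s hs => (hV' s (hu.trans hs.1)).trans (by nlinarith [hf_half s hs]))
    (left_mem_Icc.2 (by linarith)) (right_mem_Icc.2 (by linarith)) (by linarith)
  linarith

/-- Barbalat-type argument: each time `f ≥ a`, `V` drops by a fixed amount, which `V ≥ 0`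
allows only finitely often. -/
theorem tendsto_zero_of_hasDerivAt_le_neg_mul (hc : 0 < c) (hL : 0 < L)
    (hf : ∀ t ≥ t₀, HasDerivAt f (f' t) t) (hf' : ∀ t ≥ t₀, -L ≤ f' t) (hf₀ : ∀ t ≥ t₀, 0 ≤ f t)
    (hV : ∀ t ≥ t₀, HasDerivAt V (V' t) t) (hV' : ∀ t ≥ t₀, V' t ≤ -(c * f t))
    (hV₀ : ∀ t ≥ t₀, 0 ≤ V t) : Tendsto f atTop (𝓝 0) := by
  refine tendsto_order.2 ⟨fun a ha => eventually_atTop.2 ⟨t₀, fun t ht => ha.trans_le (hf₀ t ht)⟩,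
    fun a ha => ?_⟩
  by_contra hfreq
  rw [not_eventually, frequently_atTop] at hfreq
  have hmono : ∀ s t, t₀ ≤ s → s ≤ t → V t ≤ V s := fun s t hs hst => by
    have := image_sub_le_mul_sub_of_hasDerivAt_le (convex_Ici t₀) hV
      (fun t ht => (hV' t ht).trans (neg_nonpos.2 (mul_nonneg hc.le (hf₀ t ht)))) hs
      (hs.trans hst) hst
    linarith
  set m := c * (a / 2) * (a / (2 * L))
  have hm : 0 < m := by positivity
  have hV_unbounded : ∀ k : ℕ, ∃ t ≥ t₀, V t ≤ V t₀ - k * m := by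
    intro k
    induction k with
    | zero => exact ⟨t₀, le_rfl, by simp⟩
    | succ k ih =>
      obtain ⟨t, ht, hVt⟩ := ih
      obtain ⟨u, hu, hfu⟩ := hfreq t
      have hdrop : V (u + a / (2 * L)) - V u ≤ -m :=
        sub_le_of_le_of_hasDerivAt_le_neg_mul hL hf hf' hV hV' hc.le ha (ht.trans hu)
          (not_lt.1 hfu)
      refine ⟨u + a / (2 * L), by linarith [show 0 < a / (2 * L) by positivity], ?_⟩
      push_cast
      linarith [hmono t u ht hu]
  obtain ⟨k, hk⟩ := exists_nat_gt (V t₀ / m)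
  obtain ⟨t, ht, hVt⟩ := hV_unbounded k
  rw [div_lt_iff₀ hm] at hk
  linarith [hV₀ t ht]

end Barbalat

theorem tendsto_zero_of_lyapunov_of_bounded {ι : Type*} [Fintype ι] {y y' : ℝ → ι → ℝ}
    {V V' : ℝ → ℝ} {t₀ c Y D : ℝ} (hc : 0 < c) (hy : ∀ t ≥ t₀, HasDerivAt y (y' t) t)
    (hY : ∀ t ≥ t₀, ‖y t‖ ≤ Y) (hD : ∀ t ≥ t₀, ‖y' t‖ ≤ D)
    (hV : ∀ t ≥ t₀, HasDerivAt V (V' t) t) (hV' : ∀ t ≥ t₀, V' t ≤ -(c * ∑ p, y t p ^ 2))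
    (hV₀ : ∀ t ≥ t₀, 0 ≤ V t) : Tendsto y atTop (𝓝 0) := by
  have hY₀ : 0 ≤ Y := (norm_nonneg _).trans (hY t₀ le_rfl)
  have hD₀ : 0 ≤ D := (norm_nonneg _).trans (hD t₀ le_rfl)
  have hf' : ∀ t ≥ t₀, -(2 * Fintype.card ι * (Y * D) + 1) ≤ 2 * (y t ⬝ᵥ y' t) := fun t ht => by
    have hyy' : ‖y t‖ * ‖y' t‖ ≤ Y * D := mul_le_mul (hY t ht) (hD t ht) (norm_nonneg _) hY₀
    nlinarith [abs_dotProduct_le_card_mul (y t) (y' t), neg_abs_le (y t ⬝ᵥ y' t),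
      (Nat.cast_nonneg (Fintype.card ι) : (0 : ℝ) ≤ _)]
  have hf := tendsto_zero_of_hasDerivAt_le_neg_mul hc (by positivity)
    (fun t ht => hasDerivAt_sum_sq (hy t ht)) hf' (fun t _ => by positivity) hV hV' hV₀
  exact squeeze_zero_norm (fun t => norm_le_sqrt_sum_sq (y t)) (by simpa using hf.sqrt)

section EventTriggered

variable {N A E : Type*} [Fintype N] [Fintype A] [Fintype E]

/-- The paper's `βᵢ ‖εᵢ‖₁ - wᵢᵀ εᵢ`, for the block `εᵢ = ε (i, ·)` of a stacked vector. -/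
def triggerFunction (β : N → ℝ) (ε w : N × A → ℝ) (i : N) : ℝ :=
  β i * (∑ a, |ε (i, a)|) - ∑ a, w (i, a) * ε (i, a)

lemma dotProduct_sub_le_sum_triggerFunction (β : N → ℝ) (ε h w : N × A → ℝ)
    (hh : ∀ i, ‖h‖ ≤ β i) : ε ⬝ᵥ (h - w) ≤ ∑ i, triggerFunction β ε w i := by
  have hεh : ε ⬝ᵥ h ≤ ∑ i, β i * ∑ a, |ε (i, a)| := by
    rw [dotProduct, Fintype.sum_prod_type]
    refine Finset.sum_le_sum fun i _ => ?_
    rw [Finset.mul_sum]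
    refine Finset.sum_le_sum fun a _ => ?_
    rw [mul_comm (β i)]
    refine (le_abs_self _).trans ?_
    rw [abs_mul]
    exact mul_le_mul_of_nonneg_left ((norm_le_pi_norm h _).trans (hh i)) (abs_nonneg _)
  have hεw : ε ⬝ᵥ w = ∑ i, ∑ a, w (i, a) * ε (i, a) := by
    simp only [dotProduct, Fintype.sum_prod_type, mul_comm]
  simp only [triggerFunction, Finset.sum_sub_distrib, dotProduct_sub, ← hεw]
  linarith

lemma dotProduct_sub_mul_sign_add_sum_le (ξ m k : E → ℝ) {kbar : ℝ} (hm : ‖m‖ ≤ kbar) :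
    ξ ⬝ᵥ (m - fun j => k j * Real.sign (ξ j)) + ∑ j, (k j - kbar) * |ξ j| ≤ 0 := by
  rw [dotProduct, ← Finset.sum_add_distrib]
  refine Finset.sum_nonpos fun j _ => ?_
  have hξm : ξ j * m j ≤ |ξ j| * kbar := by
    refine (le_abs_self _).trans ?_
    rw [abs_mul]
    exact mul_le_mul_of_nonneg_left ((norm_le_pi_norm m j).trans hm) (abs_nonneg _)
  have hsign : ξ j * (m j - k j * Real.sign (ξ j)) = ξ j * m j - k j * |ξ j| := by
    rw [← mul_sign_eq_abs]; ring
  simp only [Pi.sub_apply, hsign]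
  linarith

noncomputable def lyapunov {ι : Type*} [Fintype ι] (y : ι → ℝ) (η δ : N → ℝ) (k : E → ℝ)
    (kbar : ℝ) : ℝ :=
  (∑ p, y p ^ 2) / 2 + ∑ i, η i / δ i + (∑ j, (k j - kbar) ^ 2) / 2

section Lyapunov

variable {ι : Type*} [Fintype ι] {y : ι → ℝ} {η δ : N → ℝ} {k : E → ℝ} {kbar : ℝ}

lemma lyapunov_nonneg (hηδ : ∀ i, 0 ≤ η i / δ i) : 0 ≤ lyapunov y η δ k kbar := by
  unfold lyapunov
  have := Finset.sum_nonneg fun i (_ : i ∈ Finset.univ) => hηδ i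
  positivity

lemma norm_le_sqrt_two_mul_lyapunov (hηδ : ∀ i, 0 ≤ η i / δ i) :
    ‖y‖ ≤ √(2 * lyapunov y η δ k kbar) := by
  refine (norm_le_sqrt_sum_sq y).trans (Real.sqrt_le_sqrt ?_)
  unfold lyapunov
  have := Finset.sum_nonneg fun i (_ : i ∈ Finset.univ) => hηδ i
  have : 0 ≤ ∑ j, (k j - kbar) ^ 2 := by positivity
  linarith

lemma norm_sub_const_le_sqrt_two_mul_lyapunov (hηδ : ∀ i, 0 ≤ η i / δ i) :
    ‖fun j => k j - kbar‖ ≤ √(2 * lyapunov y η δ k kbar) := by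
  refine (norm_le_sqrt_sum_sq _).trans (Real.sqrt_le_sqrt ?_)
  unfold lyapunov
  have := Finset.sum_nonneg fun i (_ : i ∈ Finset.univ) => hηδ i
  have : 0 ≤ ∑ p, y p ^ 2 := by positivity
  linarith

end Lyapunov

lemma hasDerivAt_lyapunov {ι : Type*} [Fintype ι] {y : ℝ → ι → ℝ} {y' : ι → ℝ} {η : N → ℝ → ℝ}
    {η' : N → ℝ} {κ : E → ℝ → ℝ} {κ' : E → ℝ} (δ : N → ℝ) (kbar : ℝ) {t : ℝ}
    (hy : HasDerivAt y y' t) (hη : ∀ i, HasDerivAt (η i) (η' i) t)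
    (hκ : ∀ j, HasDerivAt (κ j) (κ' j) t) :
    HasDerivAt (fun s => lyapunov (y s) (fun i => η i s) δ (fun j => κ j s) kbar)
      (y t ⬝ᵥ y' + ∑ i, η' i / δ i + ∑ j, (κ j t - kbar) * κ' j) t := by
  have hκ_sub : HasDerivAt (fun s j => κ j s - kbar) κ' t :=
    hasDerivAt_pi.2 fun j => (hκ j).sub_const kbar
  refine ((((hasDerivAt_sum_sq hy).div_const 2).add
    (HasDerivAt.fun_sum fun i _ => (hη i).div_const (δ i))).add
    ((hasDerivAt_sum_sq hκ_sub).div_const 2)).congr_deriv ?_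
  simp only [dotProduct]
  ring

/-- The left-hand side is the derivative of `lyapunov` along the closed loop
(`hasDerivAt_lyapunov`): the adaptive gains absorb the disturbance `m`, and the triggering rule
absorbs the measurement error `ε`. -/
lemma lyapunov_deriv_le (R : Matrix (N × A) E ℝ) {γ kbar H : ℝ} {α δ β η : N → ℝ}
    {y ε w : N × A → ℝ} {m ξ k : E → ℝ} (hm : ‖m‖ ≤ kbar) (hRm : ‖R *ᵥ m‖ ≤ H)
    (hβ : ∀ i, H ≤ β i) (hα : ∀ i, 0 ≤ α i) (hηδ : ∀ i, 0 ≤ η i / δ i) (hδ : ∀ i, δ i ≠ 0)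
    (hξ : ξ = Rᵀ *ᵥ (y - ε)) (hw : w = R *ᵥ fun j => k j * Real.sign (ξ j)) :
    y ⬝ᵥ (-γ • y + R *ᵥ m - w) + ∑ i, (-α i * η i - δ i * triggerFunction β ε w i) / δ i
      + ∑ j, (k j - kbar) * |ξ j| ≤ -(γ * ∑ p, y p ^ 2) := by
  have hy : y ⬝ᵥ (-γ • y + R *ᵥ m - w) = -(γ * ∑ p, y p ^ 2)
      + ξ ⬝ᵥ (m - fun j => k j * Real.sign (ξ j)) + ε ⬝ᵥ (R *ᵥ m - w) := by
    have hRv : y ⬝ᵥ (R *ᵥ m - w) = ξ ⬝ᵥ (m - fun j => k j * Real.sign (ξ j))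
        + ε ⬝ᵥ (R *ᵥ m - w) := by
      rw [hw, ← mulVec_sub, hξ, mulVec_transpose, ← dotProduct_mulVec, ← add_dotProduct,
        sub_add_cancel]
    rw [add_sub_assoc, dotProduct_add, hRv, dotProduct_smul, smul_eq_mul, dotProduct]
    simp only [sq]
    ring
  have hη : ∑ i, (-α i * η i - δ i * triggerFunction β ε w i) / δ i
      = -∑ i, α i * η i / δ i - ∑ i, triggerFunction β ε w i := by
    rw [← Finset.sum_neg_distrib, ← Finset.sum_sub_distrib]
    refine Finset.sum_congr rfl fun i _ => ?_
    field_simp [hδ i]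
  rw [hy, hη]
  have := dotProduct_sub_mul_sign_add_sum_le ξ m k hm
  have := dotProduct_sub_le_sum_triggerFunction β ε (R *ᵥ m) w fun i => hRm.trans (hβ i)
  have : 0 ≤ ∑ i, α i * η i / δ i := Finset.sum_nonneg fun i _ => by
    rw [mul_div_assoc]; exact mul_nonneg (hα i) (hηδ i)
  linarith

lemma dynamicTrigger_nonneg {η s : ℝ → ℝ} {α δ θ t₀ : ℝ} (hδ : 0 ≤ δ) (hθ : 0 < θ)
    (hη : ∀ t ≥ t₀, HasDerivAt η (-α * η t - δ * s t) t) (hη₀ : 0 ≤ η t₀)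
    (htrig : ∀ t ≥ t₀, θ * s t ≤ η t) {t : ℝ} (ht : t₀ ≤ t) : 0 ≤ η t := by
  refine nonneg_of_hasDerivAt_ge_neg_mul (K := α + δ / θ) hη (fun u hu => ?_) hη₀ ht
  have hδs : δ * s u ≤ δ / θ * η u := by
    rw [div_mul_eq_mul_div, le_div_iff₀ hθ]
    nlinarith [mul_le_mul_of_nonneg_left (htrig u hu) hδ]
  linarith

theorem tendsto_zero_of_eventTriggered_signFeedback (R : Matrix (N × A) E ℝ)
    {γ t₀ kbar H : ℝ} (hγ : 0 < γ) {α δ θ β : N → ℝ}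
    (hα : ∀ i, 0 ≤ α i) (hδ : ∀ i, 0 < δ i) (hθ : ∀ i, 0 < θ i) (hβ : ∀ i, H ≤ β i)
    {y ε w : ℝ → N × A → ℝ} {m ξ : ℝ → E → ℝ} {κ : E → ℝ → ℝ} {η : N → ℝ → ℝ}
    (hm : ∀ t ≥ t₀, ‖m t‖ ≤ kbar) (hRm : ∀ t ≥ t₀, ‖R *ᵥ m t‖ ≤ H)
    (hξ : ∀ t ≥ t₀, ξ t = Rᵀ *ᵥ (y t - ε t))
    (hw : ∀ t ≥ t₀, w t = R *ᵥ fun j => κ j t * Real.sign (ξ t j))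
    (hy : ∀ t ≥ t₀, HasDerivAt y (-γ • y t + R *ᵥ m t - w t) t)
    (hκ : ∀ j, ∀ t ≥ t₀, HasDerivAt (κ j) |ξ t j| t)
    (hη : ∀ i, ∀ t ≥ t₀, HasDerivAt (η i)
      (-α i * η i t - δ i * triggerFunction β (ε t) (w t) i) t)
    (hη₀ : ∀ i, 0 ≤ η i t₀)
    (htrig : ∀ i, ∀ t ≥ t₀, θ i * triggerFunction β (ε t) (w t) i ≤ η i t) :
    Tendsto y atTop (𝓝 0) := by
  have hηδ : ∀ t ≥ t₀, ∀ i, 0 ≤ η i t / δ i := fun t ht i =>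
    div_nonneg (dynamicTrigger_nonneg (hδ i).le (hθ i) (hη i) (hη₀ i) (htrig i) ht) (hδ i).le
  set V := fun t => lyapunov (y t) (fun i => η i t) δ (fun j => κ j t) kbar
  have hV := fun t (ht : t ≥ t₀) =>
    hasDerivAt_lyapunov δ kbar (hy t ht) (fun i => hη i t ht) (fun j => hκ j t ht)
  have hV' := fun t (ht : t ≥ t₀) => lyapunov_deriv_le R (γ := γ) (hm t ht) (hRm t ht) hβ hα
    (hηδ t ht) (fun i => (hδ i).ne') (hξ t ht) (hw t ht)
  have hV_le : ∀ t ≥ t₀, V t ≤ V t₀ := fun t ht => by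
    have := image_sub_le_mul_sub_of_hasDerivAt_le (C := 0) (convex_Ici t₀) hV
      (fun s hs => (hV' s hs).trans (neg_nonpos.2 (by positivity))) self_mem_Ici ht ht
    linarith
  set C := √(2 * V t₀)
  have hyC : ∀ t ≥ t₀, ‖y t‖ ≤ C := fun t ht => (norm_le_sqrt_two_mul_lyapunov (hηδ t ht)).trans
    (Real.sqrt_le_sqrt (by linarith [hV_le t ht]))
  have hκC : ∀ t ≥ t₀, ‖fun j => κ j t‖ ≤ C + |kbar| := fun t ht => by
    rw [show (fun j => κ j t) = (fun j => κ j t - kbar) + fun _ => kbar by ext; simp]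
    exact norm_add_le_of_le ((norm_sub_const_le_sqrt_two_mul_lyapunov (hηδ t ht)).trans
      (Real.sqrt_le_sqrt (by linarith [hV_le t ht]))) (pi_norm_const_le kbar)
  have hy'D : ∀ t ≥ t₀, ‖-γ • y t + R *ᵥ m t - w t‖ ≤ γ * C + H + matInfNorm R * (C + |kbar|) := by
    intro t ht
    refine norm_sub_le_of_le (norm_add_le_of_le ?_ (hRm t ht)) ?_
    · rw [norm_smul, norm_neg, Real.norm_of_nonneg hγ.le]
      exact mul_le_mul_of_nonneg_left (hyC t ht) hγ.le
    · rw [hw t ht]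
      exact norm_mulVec_le_matInfNorm_mul_of_le R ((norm_mul_sign_le _ _).trans (hκC t ht))
  exact tendsto_zero_of_lyapunov_of_bounded hγ hy hyC hy'D hV hV'
    fun t ht => lyapunov_nonneg (hηδ t ht)

end EventTriggered

lemma transpose_kronecker_one {l m n : Type*} [DecidableEq n] (B : Matrix l m ℝ) :
    (B ⊗ₖ (1 : Matrix n n ℝ))ᵀ = Bᵀ ⊗ₖ 1 := by
  rw [← kroneckerMap_transpose, transpose_one]

lemma mul_mul_transpose_mul_self_of_mul_mul_eq {m n : Type*} [Fintype m] [Fintype n]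
    [DecidableEq n] {B : Matrix m n ℝ} {P : Matrix n n ℝ}
    (hP : Bᵀ * B * P * (Bᵀ * B) = Bᵀ * B) : B * P * (Bᵀ * B) = B := by
  have h : Bᴴ * B * (P * (Bᵀ * B) - 1) = 0 := by
    rw [conjTranspose_eq_transpose_of_trivial, Matrix.mul_sub, ← Matrix.mul_assoc, hP,
      Matrix.mul_one, sub_self]
  rw [conjTranspose_mul_self_mul_eq_zero, Matrix.mul_sub, Matrix.mul_one, sub_eq_zero] at h
  rwa [Matrix.mul_assoc]

section Incidence

variable {V : Type*} [Fintype V] [DecidableEq V] (G : SimpleGraph V) [DecidableRel G.Adj]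

lemma vecMul_dartIncidence (f : V → ℝ) (d : G.Dart) :
    (f ᵥ* dartIncidence G) d = f d.snd - f d.fst := by
  have hne := d.snd_ne_fst
  simp [vecMul, dotProduct, dartIncidence, mul_ite, Finset.sum_ite, Finset.filter_eq, hne,
    sub_eq_add_neg]

lemma eq_of_vecMul_dartIncidence_eq_zero (hG : G.Connected) {f : V → ℝ}
    (hf : f ᵥ* dartIncidence G = 0) (u v : V) : f u = f v := by
  -- constancy along edges propagates along walks; the Laplacian API packages this
  refine (SimpleGraph.lapMatrix_toLinearMap₂'_apply'_eq_zero_iff_forall_reachable G f).1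
    ((SimpleGraph.lapMatrix_toLinearMap₂'_apply'_eq_zero_iff_forall_adj ℝ G f).2
      fun i j hij => ?_) u v (hG.preconnected u v)
  have := congrFun hf ⟨(i, j), hij⟩
  rw [vecMul_dartIncidence, Pi.zero_apply, sub_eq_zero] at this
  exact this.symm

lemma of_const_mul_dartIncidence {ι : Type*} (c : ℝ) :
    (of fun (_ : ι) (_ : V) => c) * dartIncidence G = 0 := by
  ext i d
  change ((fun _ => c) ᵥ* dartIncidence G) d = 0
  rw [vecMul_dartIncidence, sub_self]

lemma transpose_dartIncidence_mul_of_const {ι : Type*} (c : ℝ) :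
    (dartIncidence G)ᵀ * (of fun (_ : V) (_ : ι) => c) = 0 := by
  have := congrArg transpose (of_const_mul_dartIncidence G (ι := ι) c)
  rwa [transpose_mul, transpose_zero] at this

theorem dartIncidence_mul_mul_transpose (hG : G.Connected) {P : Matrix G.Dart G.Dart ℝ}
    (hP : (dartIncidence G)ᵀ * dartIncidence G * P * ((dartIncidence G)ᵀ * dartIncidence G)
      = (dartIncidence G)ᵀ * dartIncidence G) :
    dartIncidence G * P * (dartIncidence G)ᵀ = 1 - of fun _ _ : V => (1 : ℝ) / Fintype.card V := by
  set J : Matrix V V ℝ := of fun _ _ => 1 / Fintype.card V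
  set S := 1 - J - dartIncidence G * P * (dartIncidence G)ᵀ
  have hSB : S * dartIncidence G = 0 := by
    rw [Matrix.sub_mul, Matrix.sub_mul, Matrix.one_mul, of_const_mul_dartIncidence,
      Matrix.mul_assoc, mul_mul_transpose_mul_self_of_mul_mul_eq hP, sub_zero, sub_self]
  have hS1 : S *ᵥ (fun _ => 1) = (fun _ => 1) - J *ᵥ (fun _ => 1) := by
    have hB1 : (dartIncidence G)ᵀ *ᵥ (fun _ => (1 : ℝ)) = 0 := by
      ext d
      rw [mulVec_transpose, vecMul_dartIncidence, sub_self, Pi.zero_apply]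
    rw [sub_mulVec, ← mulVec_mulVec, hB1, mulVec_zero, sub_zero, sub_mulVec, one_mulVec]
  suffices S = 0 by rwa [sub_eq_zero, eq_comm] at this
  ext u v
  have hrow : ∀ v, S u v = S u u := fun v =>
    eq_of_vecMul_dartIncidence_eq_zero G hG (congrFun hSB u) v u
  have hcard : (Fintype.card V : ℝ) ≠ 0 := Nat.cast_ne_zero.2 (@Fintype.card_ne_zero V _ ⟨u⟩)
  have hSuu : S u u = 0 := by simpa [mulVec, dotProduct, hrow, J, hcard] using congrFun hS1 u
  rw [hrow, hSuu]; rfl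

variable {A : Type*} [Fintype A] [DecidableEq A]

lemma transpose_dartIncidence_kronecker_mul_of_const (c : ℝ) :
    (dartIncidence G ⊗ₖ (1 : Matrix A A ℝ))ᵀ * ((of fun _ _ : V => c) ⊗ₖ (1 : Matrix A A ℝ))
      = 0 := by
  rw [transpose_kronecker_one, ← mul_kronecker_mul, transpose_dartIncidence_mul_of_const,
    zero_kronecker]

theorem dartIncidence_kronecker_mul_mul_transpose (hG : G.Connected) {P : Matrix G.Dart G.Dart ℝ}
    (hP : (dartIncidence G)ᵀ * dartIncidence G * P * ((dartIncidence G)ᵀ * dartIncidence G)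
      = (dartIncidence G)ᵀ * dartIncidence G) :
    dartIncidence G ⊗ₖ (1 : Matrix A A ℝ) * P ⊗ₖ (1 : Matrix A A ℝ)
        * (dartIncidence G ⊗ₖ (1 : Matrix A A ℝ))ᵀ
      = 1 - (of fun _ _ : V => (1 : ℝ) / Fintype.card V) ⊗ₖ (1 : Matrix A A ℝ) := by
  rw [transpose_kronecker_one, ← mul_kronecker_mul, ← mul_kronecker_mul, Matrix.one_mul,
    Matrix.one_mul, dartIncidence_mul_mul_transpose G hG hP]
  exact eq_sub_of_add_eq (by rw [← add_kronecker, sub_add_cancel, one_kronecker_one])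

end Incidence

lemma hasDerivAt_add_sub_mulVec {ι : Type*} [Fintype ι] [DecidableEq ι] (J : Matrix ι ι ℝ)
    {z φ : ℝ → ι → ℝ} {w φ' : ι → ℝ} {γ t : ℝ} (hz : HasDerivAt z (-γ • z t - w) t)
    (hφ : HasDerivAt φ φ' t) :
    HasDerivAt (fun s => z s + φ s - J *ᵥ φ s)
      (-γ • (z t + φ t - J *ᵥ φ t) + (1 - J) *ᵥ (γ • φ t + φ') - w) t := by
  have hJφ : HasDerivAt (fun s => J *ᵥ φ s) (J *ᵥ φ') t :=
    (mulVecLin J).toContinuousLinearMap.hasFDerivAt.comp_hasDerivAt t hφ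
  refine ((hz.add hφ).sub hJφ).congr_deriv ?_
  simp only [sub_mulVec, one_mulVec, mulVec_add, mulVec_smul, smul_add, smul_sub]
  module

theorem event_triggered_robust_dac_asymptotic_convergence_general
    {V : Type*} [Fintype V] [DecidableEq V] (G : SimpleGraph V) [DecidableRel G.Adj]
    (hG : G.Connected)
    (r : ℕ) (γ : ℝ) (hγ : 0 < γ) (t₀ : ℝ)
    (φ φ' : ℝ → V × Fin r → ℝ) (hφ : ∀ t : ℝ, HasDerivAt φ (φ' t) t)
    (φbar dφbar : ℝ)
    (hφbar : ∀ t ≥ t₀,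
      ‖((dartIncidence G)ᵀ ⊗ₖ (1 : Matrix (Fin r) (Fin r) ℝ)).mulVec (φ t)‖ ≤ φbar)
    (hdφbar : ∀ t ≥ t₀,
      ‖((dartIncidence G)ᵀ ⊗ₖ (1 : Matrix (Fin r) (Fin r) ℝ)).mulVec (φ' t)‖ ≤ dφbar)
    -- Moore–Penrose pseudoinverse `P = (BᵀB)⁺`
    (P : Matrix G.Dart G.Dart ℝ)
    (hP1 : ((dartIncidence G)ᵀ * dartIncidence G) * P * ((dartIncidence G)ᵀ * dartIncidence G)
        = (dartIncidence G)ᵀ * dartIncidence G)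
    -- local design parameters
    (β α δ θ : V → ℝ)
    (hβ : ∀ i, (γ * φbar + dφbar) *
      matInfNorm ((dartIncidence G * P) ⊗ₖ (1 : Matrix (Fin r) (Fin r) ℝ)) ≤ β i)
    (hα : ∀ i, 0 < α i) (hδ : ∀ i, 1 ≤ δ i) (hθ : ∀ i, θ i ∈ Set.Ioo (0 : ℝ) 1)
    -- states, broadcast states, adaptive gains, internal triggering variables
    (z xhat : ℝ → V × Fin r → ℝ) (κ : G.Dart × Fin r → ℝ → ℝ) (η : V → ℝ → ℝ)
    (x : ℝ → V × Fin r → ℝ) (hx : ∀ t : ℝ, x t = z t + φ t)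
    (ξhat : ℝ → G.Dart × Fin r → ℝ)
    (hξhat : ∀ t : ℝ,
      ξhat t = ((dartIncidence G)ᵀ ⊗ₖ (1 : Matrix (Fin r) (Fin r) ℝ)).mulVec (xhat t))
    (w : ℝ → V × Fin r → ℝ)
    (hw : ∀ t : ℝ, w t = (dartIncidence G ⊗ₖ (1 : Matrix (Fin r) (Fin r) ℝ)).mulVec
      ((Matrix.diagonal fun j => κ j t).mulVec fun j => Real.sign (ξhat t j)))
    (ε : ℝ → V × Fin r → ℝ) (hε : ∀ t : ℝ, ε t = x t - xhat t)
    -- dynamics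
    (hz : ∀ t ≥ t₀, HasDerivAt z (-γ • z t - w t) t)
    (hκ : ∀ j, ∀ t ≥ t₀, HasDerivAt (κ j) |ξhat t j| t)
    (hη : ∀ i, ∀ t ≥ t₀, HasDerivAt (η i)
      (-α i * η i t - δ i *
        (β i * (∑ a, |ε t (i, a)|) - ∑ a, w t (i, a) * ε t (i, a))) t)
    (hη0 : ∀ i, 0 < η i t₀)
    -- the triggering mechanism enforces this inequality at all times
    (htrig : ∀ i, ∀ t ≥ t₀,
      θ i * (β i * (∑ a, |ε t (i, a)|) - ∑ a, w t (i, a) * ε t (i, a)) ≤ η i t) :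
    Filter.Tendsto (fun t => x t -
        ((Matrix.of fun _ _ : V => (1 : ℝ) / Fintype.card V)
          ⊗ₖ (1 : Matrix (Fin r) (Fin r) ℝ)).mulVec (φ t))
      Filter.atTop (nhds 0) := by
  set I : Matrix (Fin r) (Fin r) ℝ := 1
  set R := dartIncidence G ⊗ₖ I
  set M := P ⊗ₖ I
  have hRT : (dartIncidence G)ᵀ ⊗ₖ I = Rᵀ := (transpose_kronecker_one _).symm
  have hRM : (dartIncidence G * P) ⊗ₖ I = R * M := by rw [← mul_kronecker_mul, Matrix.one_mul]
  have hg : ∀ t ≥ t₀, ‖Rᵀ *ᵥ (γ • φ t + φ' t)‖ ≤ γ * φbar + dφbar := fun t ht => by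
    rw [mulVec_add, mulVec_smul, ← hRT]
    refine norm_add_le_of_le ?_ (hdφbar t ht)
    rw [norm_smul, Real.norm_of_nonneg hγ.le]
    exact mul_le_mul_of_nonneg_left (hφbar t ht) hγ.le
  refine tendsto_zero_of_eventTriggered_signFeedback R hγ (fun i => (hα i).le)
    (fun i => one_pos.trans_le (hδ i)) (fun i => (hθ i).1)
    (H := matInfNorm (R * M) * (γ * φbar + dφbar)) (fun i => by rw [← hRM, mul_comm]; exact hβ i)
    (m := fun t => M *ᵥ (Rᵀ *ᵥ (γ • φ t + φ' t)))
    (fun t ht => norm_mulVec_le_matInfNorm_mul_of_le M (hg t ht))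
    (fun t ht => by rw [mulVec_mulVec]; exact norm_mulVec_le_matInfNorm_mul_of_le _ (hg t ht))
    (fun t _ => by rw [hξhat, hε, hRT, sub_sub_sub_cancel_left, mulVec_sub, mulVec_mulVec,
      transpose_dartIncidence_kronecker_mul_of_const, zero_mulVec, sub_zero])
    (fun t _ => by rw [hw t]; congr 1; ext j; exact mulVec_diagonal _ _ j)
    (fun t ht => ?_) hκ hη (fun i => (hη0 i).le) htrig
  rw [mulVec_mulVec, mulVec_mulVec, dartIncidence_kronecker_mul_mul_transpose G hG hP1, funext hx]
  exact hasDerivAt_add_sub_mulVec _ (hz t ht) (hφ t)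

/-- asymptotic convergence of the dynamic event-triggered robust dynamic average
consensus algorithm `ż = -γ z - w`, `w = (B ⊗ I_r) K̂(t) sgn((Bᵀ ⊗ I_r) x̂)`, `x = z + φ`, with
adaptive gains `κ̇ⱼ = |ξ̂ⱼ|`, internal triggering dynamics
`η̇ᵢ = -αᵢ ηᵢ - δᵢ (βᵢ ‖εᵢ‖₁ - wᵢᵀ εᵢ)` and enforced triggering inequality
`θᵢ (βᵢ ‖εᵢ‖₁ - wᵢᵀ εᵢ) ≤ ηᵢ`: the error `x̃(t) = x(t) - ((1/n) 1ₙ1ₙᵀ ⊗ I_r) φ(t)` tends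
to `0` for every initial condition.  (Norms on `ι → ℝ` are sup norms; `P` is the Moore–Penrose
pseudoinverse of `BᵀB`, characterized by the four Penrose conditions.) -/
theorem event_triggered_robust_dac_asymptotic_convergence
    {V : Type*} [Fintype V] [DecidableEq V] (G : SimpleGraph V) [DecidableRel G.Adj]
    (hG : G.Connected) (hn : 2 ≤ Fintype.card V)
    (r : ℕ) (hr : 1 ≤ r) (γ : ℝ) (hγ : 0 < γ) (t₀ : ℝ)
    (φ φ' : ℝ → V × Fin r → ℝ) (hφ : ∀ t : ℝ, HasDerivAt φ (φ' t) t)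
    (φbar dφbar : ℝ)
    (hφbar : ∀ t ≥ t₀,
      ‖((dartIncidence G)ᵀ ⊗ₖ (1 : Matrix (Fin r) (Fin r) ℝ)).mulVec (φ t)‖ ≤ φbar)
    (hdφbar : ∀ t ≥ t₀,
      ‖((dartIncidence G)ᵀ ⊗ₖ (1 : Matrix (Fin r) (Fin r) ℝ)).mulVec (φ' t)‖ ≤ dφbar)
    -- Moore–Penrose pseudoinverse `P = (BᵀB)⁺`
    (P : Matrix G.Dart G.Dart ℝ)
    (hP1 : ((dartIncidence G)ᵀ * dartIncidence G) * P * ((dartIncidence G)ᵀ * dartIncidence G)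
        = (dartIncidence G)ᵀ * dartIncidence G)
    (hP2 : P * ((dartIncidence G)ᵀ * dartIncidence G) * P = P)
    (hP3 : (((dartIncidence G)ᵀ * dartIncidence G) * P)ᵀ
        = ((dartIncidence G)ᵀ * dartIncidence G) * P)
    (hP4 : (P * ((dartIncidence G)ᵀ * dartIncidence G))ᵀ
        = P * ((dartIncidence G)ᵀ * dartIncidence G))
    -- local design parameters
    (β α δ θ : V → ℝ)
    (hβ : ∀ i, (γ * φbar + dφbar) *
      matInfNorm ((dartIncidence G * P) ⊗ₖ (1 : Matrix (Fin r) (Fin r) ℝ)) ≤ β i)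
    (hα : ∀ i, 0 < α i) (hδ : ∀ i, 1 ≤ δ i) (hθ : ∀ i, θ i ∈ Set.Ioo (0 : ℝ) 1)
    -- states, broadcast states, adaptive gains, internal triggering variables
    (z xhat : ℝ → V × Fin r → ℝ) (κ : G.Dart × Fin r → ℝ → ℝ) (η : V → ℝ → ℝ)
    (x : ℝ → V × Fin r → ℝ) (hx : ∀ t : ℝ, x t = z t + φ t)
    (ξhat : ℝ → G.Dart × Fin r → ℝ)
    (hξhat : ∀ t : ℝ,
      ξhat t = ((dartIncidence G)ᵀ ⊗ₖ (1 : Matrix (Fin r) (Fin r) ℝ)).mulVec (xhat t))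
    (w : ℝ → V × Fin r → ℝ)
    (hw : ∀ t : ℝ, w t = (dartIncidence G ⊗ₖ (1 : Matrix (Fin r) (Fin r) ℝ)).mulVec
      ((Matrix.diagonal fun j => κ j t).mulVec fun j => Real.sign (ξhat t j)))
    (ε : ℝ → V × Fin r → ℝ) (hε : ∀ t : ℝ, ε t = x t - xhat t)
    -- dynamics
    (hz : ∀ t ≥ t₀, HasDerivAt z (-γ • z t - w t) t)
    (hκ : ∀ j, ∀ t ≥ t₀, HasDerivAt (κ j) |ξhat t j| t)
    (hκ0 : ∀ j, 0 ≤ κ j t₀)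
    (hη : ∀ i, ∀ t ≥ t₀, HasDerivAt (η i)
      (-α i * η i t - δ i *
        (β i * (∑ a, |ε t (i, a)|) - ∑ a, w t (i, a) * ε t (i, a))) t)
    (hη0 : ∀ i, 0 < η i t₀)
    -- the triggering mechanism enforces this inequality at all times
    (htrig : ∀ i, ∀ t ≥ t₀,
      θ i * (β i * (∑ a, |ε t (i, a)|) - ∑ a, w t (i, a) * ε t (i, a)) ≤ η i t) :
    Filter.Tendsto (fun t => x t -
        ((Matrix.of fun _ _ : V => (1 : ℝ) / Fintype.card V)
          ⊗ₖ (1 : Matrix (Fin r) (Fin r) ℝ)).mulVec (φ t))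
      Filter.atTop (nhds 0) :=
  event_triggered_robust_dac_asymptotic_convergence_general G hG r γ hγ t₀ φ φ' hφ φbar dφbar hφbar
    hdφbar P hP1 β α δ θ hβ hα hδ hθ z xhat κ η x hx ξhat hξhat w hw ε hε hz hκ hη hη0 htrig
end

section
/- Fix r ≥ 1, constants β > 0, θ ∈ (0,1), λ > 0, η₀ > 0, w_max > 0, ẋ_max > 0, and real times t_k < t_{k+1}. Let x : ℝ → ℝ^r be differentiable on [t_k, t_{k+1}] with ‖x'(τ)‖_∞ ≤ ẋ_max for all τ ∈ [t_k, t_{k+1}], and define ε(t) = x(t_k) − x(t) for t ∈ [t_k, t_{k+1}]. Let w : ℝ → ℝ^r satisfy ‖w(t)‖_∞ ≤ w_max for all t, and let η : ℝ → ℝ satisfy η(t) ≥ η₀ e^{−λ t} for all t. If the triggering condition θ (β ‖ε(t_{k+1})‖₁ − w(t_{k+1})ᵀ ε(t_{k+1})) ≥ η(t_{k+1}) holds at time t_{k+1}, then the inter-event time satisfies t_{k+1} − t_k ≥ η₀ e^{−λ t_{k+1}} / (θ (w_max + β) r ẋ_max). -/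
/-!
The trigger gives `η₀ e^{-λ t_{k+1}} ≤ θ (w_max + β) ‖ε(t_{k+1})‖₁`, the cross term `wᵀε` being
bounded by Hölder's inequality `|wᵀε| ≤ ‖w‖_∞ ‖ε‖₁`. On the other hand the mean value theorem gives
`‖ε(t_{k+1})‖₁ ≤ r ‖ε(t_{k+1})‖_∞ ≤ r ẋ_max (t_{k+1} - t_k)`.
-/

open Finset

theorem abs_sum_mul_le_norm_mul_sum_abs {ι : Type*} [Fintype ι] (w v : ι → ℝ) :
    |∑ i, w i * v i| ≤ ‖w‖ * ∑ i, |v i| := by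
  rw [mul_sum]
  refine (abs_sum_le_sum_abs _ _).trans (sum_le_sum fun i _ => ?_)
  rw [abs_mul]
  exact mul_le_mul_of_nonneg_right (norm_le_pi_norm w i) (abs_nonneg _)

theorem sum_abs_le_card_mul_norm {ι : Type*} [Fintype ι] (v : ι → ℝ) :
    ∑ i, |v i| ≤ Fintype.card ι * ‖v‖ := by
  simpa only [Real.norm_eq_abs, nsmul_eq_mul] using Pi.sum_norm_apply_le_norm v

theorem inter_event_time_lower_bound_general
    (r : ℕ) (β θ lam η₀ wmax xdmax : ℝ)
    (hβ : 0 < β) (hθ : θ ∈ Set.Ioo (0 : ℝ) 1)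
    (tk tk1 : ℝ) (ht : tk < tk1)
    (x x' : ℝ → Fin r → ℝ)
    (hder : ∀ τ ∈ Set.Icc tk tk1, HasDerivWithinAt x (x' τ) (Set.Icc tk tk1) τ)
    (hxd : ∀ τ ∈ Set.Icc tk tk1, ‖x' τ‖ ≤ xdmax)
    (w : ℝ → Fin r → ℝ) (hw : ∀ t : ℝ, ‖w t‖ ≤ wmax)
    (η : ℝ → ℝ) (hη : ∀ t : ℝ, η₀ * Real.exp (-lam * t) ≤ η t)
    (htrig : θ * (β * (∑ a, |x tk a - x tk1 a|)
        - ∑ a, w tk1 a * (x tk a - x tk1 a)) ≥ η tk1) :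
    tk1 - tk ≥ η₀ * Real.exp (-lam * tk1) / (θ * (wmax + β) * r * xdmax) := by
  have hmvt : ‖x tk - x tk1‖ ≤ xdmax * (tk1 - tk) := by
    simpa only [norm_sub_rev (x tk1), Real.norm_eq_abs, abs_of_pos (sub_pos.2 ht)] using
      (convex_Icc tk tk1).norm_image_sub_le_of_norm_hasDerivWithin_le hder hxd
        (Set.left_mem_Icc.2 ht.le) (Set.right_mem_Icc.2 ht.le)
  have hε : ∑ a, |x tk a - x tk1 a| ≤ r * (xdmax * (tk1 - tk)) := by
    calc ∑ a, |x tk a - x tk1 a| ≤ r * ‖x tk - x tk1‖ := by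
          simpa only [Fintype.card_fin, Pi.sub_apply] using sum_abs_le_card_mul_norm (x tk - x tk1)
      _ ≤ r * (xdmax * (tk1 - tk)) := by gcongr
  have hcross : -∑ a, w tk1 a * (x tk a - x tk1 a) ≤ wmax * ∑ a, |x tk a - x tk1 a| :=
    (neg_le_abs _).trans <| (abs_sum_mul_le_norm_mul_sum_abs _ _).trans <| by gcongr; exact hw tk1
  have hwmax : 0 ≤ wmax := (norm_nonneg _).trans (hw tk)
  have hxdmax : 0 ≤ xdmax := (norm_nonneg _).trans (hxd tk (Set.left_mem_Icc.2 ht.le))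
  have hθ₀ : 0 ≤ θ := hθ.1.le
  refine div_le_of_le_mul₀ (by positivity) (sub_nonneg.2 ht.le) ?_
  calc η₀ * Real.exp (-lam * tk1) ≤ η tk1 := hη tk1
    _ ≤ θ * (β * (∑ a, |x tk a - x tk1 a|) - ∑ a, w tk1 a * (x tk a - x tk1 a)) := htrig
    _ ≤ θ * ((wmax + β) * ∑ a, |x tk a - x tk1 a|) := by gcongr; linarith
    _ ≤ θ * ((wmax + β) * (r * (xdmax * (tk1 - tk)))) := by gcongr
    _ = (tk1 - tk) * (θ * (wmax + β) * r * xdmax) := by ring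

/-- lower bound on the inter-event time for the dynamic event-triggering law.
`x : ℝ → ℝ^r` (with the sup norm on `Fin r → ℝ`) is differentiable on `[t_k, t_{k+1}]` with
`‖x'‖_∞ ≤ ẋ_max`, `ε(t) = x(t_k) - x(t)`, `‖w(t)‖_∞ ≤ w_max`, `η(t) ≥ η₀ e^{-λ t}`.  If the
triggering condition `θ (β ‖ε(t_{k+1})‖₁ - w(t_{k+1})ᵀ ε(t_{k+1})) ≥ η(t_{k+1})` holds, then
`t_{k+1} - t_k ≥ η₀ e^{-λ t_{k+1}} / (θ (w_max + β) r ẋ_max)`. -/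
theorem inter_event_time_lower_bound
    (r : ℕ) (hr : 1 ≤ r) (β θ lam η₀ wmax xdmax : ℝ)
    (hβ : 0 < β) (hθ : θ ∈ Set.Ioo (0 : ℝ) 1) (hlam : 0 < lam) (hη₀ : 0 < η₀)
    (hwmax : 0 < wmax) (hxdmax : 0 < xdmax)
    (tk tk1 : ℝ) (ht : tk < tk1)
    (x x' : ℝ → Fin r → ℝ)
    (hder : ∀ τ ∈ Set.Icc tk tk1, HasDerivWithinAt x (x' τ) (Set.Icc tk tk1) τ)
    (hxd : ∀ τ ∈ Set.Icc tk tk1, ‖x' τ‖ ≤ xdmax)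
    (w : ℝ → Fin r → ℝ) (hw : ∀ t : ℝ, ‖w t‖ ≤ wmax)
    (η : ℝ → ℝ) (hη : ∀ t : ℝ, η₀ * Real.exp (-lam * t) ≤ η t)
    (htrig : θ * (β * (∑ a, |x tk a - x tk1 a|)
        - ∑ a, w tk1 a * (x tk a - x tk1 a)) ≥ η tk1) :
    tk1 - tk ≥ η₀ * Real.exp (-lam * tk1) / (θ * (wmax + β) * r * xdmax) :=
  inter_event_time_lower_bound_general r β θ lam η₀ wmax xdmax hβ hθ tk tk1 ht x x' hder hxd w hw η
    hη htrig
end
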